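/- For z ≥ 0, let f_z be the standard solution of the half-normal Stein equation with test function h_z = 1_{(-∞,z]}. Then f_z(x) = (1-F(z))F(x)/p(x) for 0 ≤ x ≤ z and f_z(x) = F(z)(1-F(x))/p(x) for x > z, where p(x) = 2φ(x) and F(x) = 2Φ(x)-1; moreover sup_{x≥0}|f_z(x)| = (1-Φ(z))(2Φ(z)-1)/φ(z) ≤ 1/2. -/

import Mathlib

open MeasureTheory Real

/-- Standard normal density. -/
noncomputable def stdPhi (x : ℝ) : ℝ := Real.exp (-x^2/2) / Real.sqrt (2*Real.pi)

/-- Standard normal distribution function. -/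
noncomputable def stdCDF (x : ℝ) : ℝ := ∫ t in Set.Iic x, stdPhi t

/-- The standard solution of the half-normal Stein equation for `h_z = 1_{(-∞,z]}`. -/
noncomputable def fz (z x : ℝ) : ℝ :=
  (stdPhi x)⁻¹ *
    ∫ t in (0:ℝ)..x, (Set.indicator (Set.Iic z) (fun _ => (1:ℝ)) t - (2*stdCDF z - 1)) * stdPhi t

/-!
On `[0, z]` the solution is `(1 - Φ z) · (2Φ x - 1)/φ x` and on `(z, ∞)` it is
`(2Φ z - 1) · (1 - Φ x)/φ x`. The first ratio increases and the Mills ratio `(1 - Φ)/φ` decreases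
on `[0, ∞)` (the latter by the tail bound `x (1 - Φ x) ≤ φ x`), so `f_z ≥ 0` peaks at `x = z`.
The bound `1/2` says `V z = φ z / 2 - (1 - Φ z)(2Φ z - 1) ≥ 0`; since `V → 0` at infinity and
`V' = φ (4Φ - 3 - z/2)`, it suffices that `Φ z ≤ 3/4 + z/8`, a numerical estimate obtained from
the Taylor bound `exp (-c) ≤ 1 - c + c²/2 - c³/6 + c⁴/24`.
-/

open Set Filter Topology ProbabilityTheory

lemma monotoneOn_Ici_of_hasDerivAt {f f' : ℝ → ℝ} {a : ℝ} (hf : ∀ x, HasDerivAt f (f' x) x)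
    (hf' : ∀ x, a < x → 0 ≤ f' x) : MonotoneOn f (Ici a) :=
  monotoneOn_of_hasDerivWithinAt_nonneg (convex_Ici a)
    (fun x _ => (hf x).continuousAt.continuousWithinAt) (fun x _ => (hf x).hasDerivWithinAt)
    (fun x hx => hf' x (by simpa using hx))

lemma antitoneOn_Ici_of_hasDerivAt {f f' : ℝ → ℝ} {a : ℝ} (hf : ∀ x, HasDerivAt f (f' x) x)
    (hf' : ∀ x, a < x → f' x ≤ 0) : AntitoneOn f (Ici a) :=
  antitoneOn_of_hasDerivWithinAt_nonpos (convex_Ici a)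
    (fun x _ => (hf x).continuousAt.continuousWithinAt) (fun x _ => (hf x).hasDerivWithinAt)
    (fun x hx => hf' x (by simpa using hx))

lemma stdPhi_eq_gaussianPDFReal : stdPhi = gaussianPDFReal 0 1 := by
  ext x
  simp [stdPhi, gaussianPDFReal, div_eq_inv_mul]

lemma stdPhi_pos (x : ℝ) : 0 < stdPhi x := by
  unfold stdPhi; positivity

lemma continuous_stdPhi : Continuous stdPhi := by
  unfold stdPhi; fun_prop

lemma integrable_stdPhi : Integrable stdPhi :=
  stdPhi_eq_gaussianPDFReal ▸ integrable_gaussianPDFReal 0 1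

lemma integral_stdPhi : ∫ x, stdPhi x = 1 :=
  stdPhi_eq_gaussianPDFReal ▸ integral_gaussianPDFReal_eq_one 0 one_ne_zero

lemma hasDerivAt_stdPhi (x : ℝ) : HasDerivAt stdPhi (-x * stdPhi x) x := by
  have h : HasDerivAt (fun x : ℝ => -x ^ 2 / 2) (-x) x :=
    ((hasDerivAt_pow 2 x).fun_neg.div_const 2).congr_deriv (by norm_num; ring)
  exact (h.exp.div_const √(2 * π)).congr_deriv (by rw [stdPhi]; ring)

lemma tendsto_stdPhi_atTop : Tendsto stdPhi atTop (𝓝 0) := by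
  have h : Tendsto (fun x : ℝ => -x ^ 2 / 2) atTop atBot :=
    (tendsto_neg_atBot_iff.mpr (tendsto_pow_atTop two_ne_zero)).atBot_div_const two_pos
  have := (tendsto_exp_atBot.comp h).div_const √(2 * π)
  rwa [zero_div] at this

lemma integrable_mul_stdPhi : Integrable (fun t : ℝ => t * stdPhi t) := by
  refine ((integrable_mul_exp_neg_mul_sq (b := 1/2) one_half_pos).const_mul (√(2 * π))⁻¹).congr ?_
  filter_upwards with x
  simp only [stdPhi]; ring_nf

lemma integral_Ioi_mul_stdPhi (x : ℝ) : ∫ t in Ioi x, t * stdPhi t = stdPhi x := by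
  have := integral_Ioi_of_hasDerivAt_of_tendsto (f := fun t => -stdPhi t) (a := x) (m := 0)
    continuous_stdPhi.neg.continuousWithinAt
    (fun t _ => (hasDerivAt_stdPhi t).neg.congr_deriv (by ring))
    integrable_mul_stdPhi.integrableOn (by simpa using tendsto_stdPhi_atTop.neg)
  simpa using this

lemma antitoneOn_stdPhi : AntitoneOn stdPhi (Ici 0) :=
  antitoneOn_Ici_of_hasDerivAt hasDerivAt_stdPhi
    (fun x hx => by nlinarith [stdPhi_pos x])

lemma stdCDF_sub (a b : ℝ) : stdCDF b - stdCDF a = ∫ t in a..b, stdPhi t :=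
  intervalIntegral.integral_Iic_sub_Iic integrable_stdPhi.integrableOn
    integrable_stdPhi.integrableOn

lemma hasDerivAt_stdCDF (x : ℝ) : HasDerivAt stdCDF (stdPhi x) x := by
  have h : stdCDF = fun u => stdCDF 0 + ∫ t in (0:ℝ)..u, stdPhi t := by
    ext u; rw [← stdCDF_sub]; ring
  rw [h]
  exact (continuous_stdPhi.integral_hasStrictDerivAt 0 x).hasDerivAt.const_add _

lemma one_sub_stdCDF (x : ℝ) : 1 - stdCDF x = ∫ t in Ioi x, stdPhi t := by
  rw [← integral_stdPhi, ← intervalIntegral.integral_Iic_add_Ioi (b := x)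
    integrable_stdPhi.integrableOn integrable_stdPhi.integrableOn, stdCDF, add_sub_cancel_left]

lemma stdCDF_zero : stdCDF 0 = 1 / 2 := by
  have h : ∫ t in Iic (0:ℝ), stdPhi t = ∫ t in Ioi (0:ℝ), stdPhi t := by
    rw [← neg_zero, ← integral_comp_neg_Iic]
    simp [stdPhi]
  have := one_sub_stdCDF 0
  rw [stdCDF] at *
  linarith

lemma one_sub_stdCDF_nonneg (x : ℝ) : 0 ≤ 1 - stdCDF x := by
  rw [one_sub_stdCDF]
  exact setIntegral_nonneg measurableSet_Ioi fun t _ => (stdPhi_pos t).le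

lemma half_le_stdCDF {x : ℝ} (hx : 0 ≤ x) : 1 / 2 ≤ stdCDF x := by
  have := stdCDF_sub 0 x
  have := intervalIntegral.integral_nonneg (μ := volume) hx fun t _ => (stdPhi_pos t).le
  linarith [stdCDF_zero]

lemma mul_one_sub_stdCDF_le (x : ℝ) : x * (1 - stdCDF x) ≤ stdPhi x := by
  rw [one_sub_stdCDF, ← integral_const_mul, ← integral_Ioi_mul_stdPhi x]
  refine setIntegral_mono_on (integrable_stdPhi.integrableOn.const_mul x)
    integrable_mul_stdPhi.integrableOn measurableSet_Ioi fun t ht => ?_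
  exact mul_le_mul_of_nonneg_right (le_of_lt ht) (stdPhi_pos t).le

lemma tendsto_one_sub_stdCDF_atTop : Tendsto (fun x => 1 - stdCDF x) atTop (𝓝 0) := by
  refine squeeze_zero' (Eventually.of_forall one_sub_stdCDF_nonneg) ?_
    (by simpa using tendsto_stdPhi_atTop.mul tendsto_inv_atTop_zero)
  filter_upwards [eventually_gt_atTop 0] with x hx
  rw [← div_eq_mul_inv, le_div_iff₀ hx, mul_comm]
  exact mul_one_sub_stdCDF_le x

lemma hasDerivAt_div_stdPhi {u : ℝ → ℝ} {u' x : ℝ} (hu : HasDerivAt u u' x) :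
    HasDerivAt (fun y => u y / stdPhi y) (u' / stdPhi x + x * (u x / stdPhi x)) x := by
  have := stdPhi_pos x
  exact (hu.div (hasDerivAt_stdPhi x) this.ne').congr_deriv (by field_simp; ring)

lemma monotoneOn_two_mul_stdCDF_sub_one_div_stdPhi :
    MonotoneOn (fun x => (2 * stdCDF x - 1) / stdPhi x) (Ici 0) := by
  refine monotoneOn_Ici_of_hasDerivAt
    (fun x => hasDerivAt_div_stdPhi (((hasDerivAt_stdCDF x).const_mul 2).sub_const 1))
    fun x hx => ?_
  have := half_le_stdCDF hx.le
  have := stdPhi_pos x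
  exact add_nonneg (by positivity) (mul_nonneg hx.le (div_nonneg (by linarith) this.le))

noncomputable def millsRatio (x : ℝ) : ℝ := (1 - stdCDF x) / stdPhi x

lemma antitoneOn_millsRatio : AntitoneOn millsRatio (Ici 0) := by
  refine antitoneOn_Ici_of_hasDerivAt
    (fun x => hasDerivAt_div_stdPhi ((hasDerivAt_stdCDF x).const_sub 1)) fun x _ => ?_
  have hφ := stdPhi_pos x
  rw [neg_div, div_self hφ.ne', ← mul_div_assoc, neg_add_nonpos_iff, div_le_one hφ]
  exact mul_one_sub_stdCDF_le x

lemma exp_neg_le_quadratic {c : ℝ} (hc : 0 ≤ c) : exp (-c) ≤ 1 - c + c ^ 2 / 2 := by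
  have hd (u : ℝ) : HasDerivAt (fun u => 1 - u + u ^ 2 / 2 - exp (-u)) (u - 1 + exp (-u)) u :=
    ((((hasDerivAt_id u).const_sub 1).add ((hasDerivAt_pow 2 u).div_const 2)).sub
      (hasDerivAt_neg u).exp).congr_deriv (by ring)
  simpa using monotoneOn_Ici_of_hasDerivAt hd (fun u _ => by linarith [add_one_le_exp (-u)])
    self_mem_Ici hc hc

lemma cubic_le_exp_neg {c : ℝ} (hc : 0 ≤ c) : 1 - c + c ^ 2 / 2 - c ^ 3 / 6 ≤ exp (-c) := by
  have hd (u : ℝ) : HasDerivAt (fun u => exp (-u) - (1 - u + u ^ 2 / 2 - u ^ 3 / 6))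
      (-exp (-u) - (-1 + u - u ^ 2 / 2)) u :=
    ((hasDerivAt_neg u).exp.sub ((((hasDerivAt_id u).const_sub 1).add
      ((hasDerivAt_pow 2 u).div_const 2)).sub ((hasDerivAt_pow 3 u).div_const 6))).congr_deriv
      (by ring)
  simpa using monotoneOn_Ici_of_hasDerivAt hd (fun u hu => by linarith [exp_neg_le_quadratic hu.le])
    self_mem_Ici hc hc

lemma exp_neg_le_quartic {c : ℝ} (hc : 0 ≤ c) :
    exp (-c) ≤ 1 - c + c ^ 2 / 2 - c ^ 3 / 6 + c ^ 4 / 24 := by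
  have hd (u : ℝ) : HasDerivAt (fun u => 1 - u + u ^ 2 / 2 - u ^ 3 / 6 + u ^ 4 / 24 - exp (-u))
      (-1 + u - u ^ 2 / 2 + u ^ 3 / 6 + exp (-u)) u :=
    ((((((hasDerivAt_id u).const_sub 1).add ((hasDerivAt_pow 2 u).div_const 2)).sub
      ((hasDerivAt_pow 3 u).div_const 6)).add ((hasDerivAt_pow 4 u).div_const 24)).sub
      (hasDerivAt_neg u).exp).congr_deriv (by ring)
  simpa using monotoneOn_Ici_of_hasDerivAt hd (fun u hu => by linarith [cubic_le_exp_neg hu.le])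
    self_mem_Ici hc hc

lemma le_sqrt_two_mul_pi : (12533 / 5000 : ℝ) ≤ √(2 * π) :=
  le_sqrt_of_sq_le (by nlinarith [pi_gt_d6])

lemma stdPhi_le (s : ℝ) :
    stdPhi s ≤ (1 - s ^ 2 / 2 + s ^ 4 / 8 - s ^ 6 / 48 + s ^ 8 / 384) / √(2 * π) := by
  refine div_le_div_of_nonneg_right ?_ (sqrt_nonneg _)
  have := exp_neg_le_quartic (c := s ^ 2 / 2) (by positivity)
  rw [neg_div]
  linarith

lemma integral_stdPhi_le {t : ℝ} (ht : 0 ≤ t) :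
    ∫ s in (0:ℝ)..t, stdPhi s ≤
      (t - t ^ 3 / 6 + t ^ 5 / 40 - t ^ 7 / 336 + t ^ 9 / 3456) / √(2 * π) := by
  have hP : ∫ s in (0:ℝ)..t, (1 - s ^ 2 / 2 + s ^ 4 / 8 - s ^ 6 / 48 + s ^ 8 / 384) =
      t - t ^ 3 / 6 + t ^ 5 / 40 - t ^ 7 / 336 + t ^ 9 / 3456 := by
    simp (disch := exact Continuous.intervalIntegrable (by fun_prop) _ _) only
      [intervalIntegral.integral_add, intervalIntegral.integral_sub, intervalIntegral.integral_div,
        integral_pow, intervalIntegral.integral_const]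
    ring
  rw [← hP, ← intervalIntegral.integral_div]
  exact intervalIntegral.integral_mono_on ht integrable_stdPhi.intervalIntegrable
    (by apply Continuous.intervalIntegrable; fun_prop) fun s _ => stdPhi_le s

lemma integral_stdPhi_le_of_le {t : ℝ} (ht : 0 ≤ t) (ht' : t ≤ 8 / 5) :
    ∫ s in (0:ℝ)..t, stdPhi s ≤ 1 / 4 + t / 8 := by
  refine (integral_stdPhi_le ht).trans ?_
  rw [div_le_iff₀ (by positivity)]
  calc t - t ^ 3 / 6 + t ^ 5 / 40 - t ^ 7 / 336 + t ^ 9 / 3456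
        ≤ (1 / 4 + t / 8) * (12533 / 5000) := by
        nlinarith [sq_nonneg (t ^ 2 - 5 / 2), sq_nonneg (t ^ 3 - 2 * t), sq_nonneg (t - 1),
          pow_nonneg ht 7, mul_nonneg (sub_nonneg.2 ht') ht]
    _ ≤ (1 / 4 + t / 8) * √(2 * π) := by gcongr; exact le_sqrt_two_mul_pi

lemma stdPhi_le_one_div_eight {s : ℝ} (hs : 8 / 5 ≤ s) : stdPhi s ≤ 1 / 8 :=
  calc stdPhi s ≤ stdPhi (8 / 5) := antitoneOn_stdPhi (by norm_num) (mem_Ici.2 (by linarith)) hs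
    _ ≤ (1 - (8 / 5) ^ 2 / 2 + (8 / 5) ^ 4 / 8 - (8 / 5) ^ 6 / 48 + (8 / 5) ^ 8 / 384) / √(2 * π) :=
      stdPhi_le _
    _ ≤ (1 - (8 / 5) ^ 2 / 2 + (8 / 5) ^ 4 / 8 - (8 / 5) ^ 6 / 48 + (8 / 5) ^ 8 / 384) /
        (12533 / 5000) :=
      div_le_div_of_nonneg_left (by norm_num) (by norm_num) le_sqrt_two_mul_pi
    _ ≤ 1 / 8 := by norm_num

/-- The line lies above `Φ` with a margin of only about `0.004`, near `t ≈ 1.52` where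
`φ t = 1/8`: the polynomial bound is used up to `8/5`, the slope bound `φ ≤ 1/8` beyond. -/
lemma stdCDF_le {t : ℝ} (ht : 0 ≤ t) : stdCDF t ≤ 3 / 4 + t / 8 := by
  suffices ∫ s in (0:ℝ)..t, stdPhi s ≤ 1 / 4 + t / 8 by linarith [stdCDF_sub 0 t, stdCDF_zero]
  rcases le_total t (8 / 5) with h | h
  · exact integral_stdPhi_le_of_le ht h
  rw [← intervalIntegral.integral_add_adjacent_intervals (b := 8 / 5)
    integrable_stdPhi.intervalIntegrable integrable_stdPhi.intervalIntegrable]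
  have h₁ := integral_stdPhi_le_of_le (t := 8 / 5) (by norm_num) le_rfl
  have h₂ : ∫ s in (8 / 5 : ℝ)..t, stdPhi s ≤ (t - 8 / 5) * (1 / 8) := by
    simpa using intervalIntegral.integral_mono_on h integrable_stdPhi.intervalIntegrable
      intervalIntegrable_const fun s hs => stdPhi_le_one_div_eight hs.1
  linarith

noncomputable def halfBoundGap (x : ℝ) : ℝ := stdPhi x / 2 - (1 - stdCDF x) * (2 * stdCDF x - 1)

lemma hasDerivAt_halfBoundGap (x : ℝ) :
    HasDerivAt halfBoundGap (stdPhi x * (4 * stdCDF x - 3 - x / 2)) x :=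
  (((hasDerivAt_stdPhi x).div_const 2).sub (((hasDerivAt_stdCDF x).const_sub 1).mul
    (((hasDerivAt_stdCDF x).const_mul 2).sub_const 1))).congr_deriv (by ring)

lemma antitoneOn_halfBoundGap : AntitoneOn halfBoundGap (Ici 0) :=
  antitoneOn_Ici_of_hasDerivAt hasDerivAt_halfBoundGap fun x hx =>
    mul_nonpos_of_nonneg_of_nonpos (stdPhi_pos x).le (by linarith [stdCDF_le hx.le])

lemma tendsto_halfBoundGap_atTop : Tendsto halfBoundGap atTop (𝓝 0) := by
  have h := (tendsto_stdPhi_atTop.div_const 2).sub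
    (tendsto_one_sub_stdCDF_atTop.mul ((tendsto_one_sub_stdCDF_atTop.const_mul 2).const_sub 1))
  convert h using 2
  · rw [halfBoundGap]; ring
  · norm_num

lemma halfBoundGap_nonneg {x : ℝ} (hx : 0 ≤ x) : 0 ≤ halfBoundGap x :=
  le_of_tendsto tendsto_halfBoundGap_atTop <| (eventually_ge_atTop x).mono fun _ hy =>
    antitoneOn_halfBoundGap hx (hx.trans hy) hy

lemma mul_div_stdPhi_le_half {z : ℝ} (hz : 0 ≤ z) :
    (1 - stdCDF z) * (2 * stdCDF z - 1) / stdPhi z ≤ 1 / 2 := by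
  have := halfBoundGap_nonneg hz
  rw [halfBoundGap] at this
  rw [div_le_iff₀ (stdPhi_pos z)]
  linarith

lemma integral_indicator_Iic_stdPhi {z x : ℝ} (hz : 0 ≤ z) (hx : 0 ≤ x) :
    ∫ t in (0:ℝ)..x, (Iic z).indicator stdPhi t = stdCDF (min x z) - 1 / 2 := by
  rw [← stdCDF_zero, stdCDF_sub]
  rcases le_total x z with h | h
  · rw [min_eq_left h]
    refine intervalIntegral.integral_congr fun t ht => indicator_of_mem ?_ _
    rw [uIcc_of_le hx] at ht
    exact ht.2.trans h
  · rw [min_eq_right h]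
    exact intervalIntegral.integral_indicator ⟨hz, h⟩

lemma fz_eq {z x : ℝ} (hz : 0 ≤ z) (hx : 0 ≤ x) :
    fz z x = (stdCDF (min x z) - 1 / 2 - (2 * stdCDF z - 1) * (stdCDF x - 1 / 2)) / stdPhi x := by
  have h : ∀ t, ((Iic z).indicator (fun _ => (1:ℝ)) t - (2 * stdCDF z - 1)) * stdPhi t
      = (Iic z).indicator stdPhi t - (2 * stdCDF z - 1) * stdPhi t := by
    intro t
    by_cases ht : t ∈ Iic z <;> simp [ht, sub_mul]
  rw [fz, funext h, intervalIntegral.integral_sub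
    (integrable_stdPhi.indicator measurableSet_Iic).intervalIntegrable
    (integrable_stdPhi.const_mul _).intervalIntegrable, intervalIntegral.integral_const_mul,
    integral_indicator_Iic_stdPhi hz hx, ← stdCDF_sub, stdCDF_zero, inv_mul_eq_div]

lemma fz_of_le {z x : ℝ} (hx : 0 ≤ x) (hxz : x ≤ z) :
    fz z x = (1 - stdCDF z) * ((2 * stdCDF x - 1) / stdPhi x) := by
  rw [fz_eq (hx.trans hxz) hx, min_eq_left hxz]
  ring

lemma fz_of_lt {z x : ℝ} (hz : 0 ≤ z) (hzx : z < x) :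
    fz z x = (2 * stdCDF z - 1) * millsRatio x := by
  rw [fz_eq hz (hz.trans hzx.le), min_eq_right hzx.le, millsRatio]
  ring

lemma fz_nonneg {z x : ℝ} (hz : 0 ≤ z) (hx : 0 ≤ x) : 0 ≤ fz z x := by
  have hz' := half_le_stdCDF hz
  have hx' := half_le_stdCDF hx
  rcases le_or_gt x z with h | h
  · rw [fz_of_le hx h]
    exact mul_nonneg (one_sub_stdCDF_nonneg z) (div_nonneg (by linarith) (stdPhi_pos x).le)
  · rw [fz_of_lt hz h]
    exact mul_nonneg (by linarith) (div_nonneg (one_sub_stdCDF_nonneg x) (stdPhi_pos x).le)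

lemma fz_le_fz_self {z x : ℝ} (hz : 0 ≤ z) (hx : 0 ≤ x) : fz z x ≤ fz z z := by
  rcases le_or_gt x z with h | h
  · rw [fz_of_le hx h, fz_of_le hz le_rfl]
    exact mul_le_mul_of_nonneg_left
      (monotoneOn_two_mul_stdCDF_sub_one_div_stdPhi hx hz h) (one_sub_stdCDF_nonneg z)
  · have hself : fz z z = (2 * stdCDF z - 1) * millsRatio z := by
      rw [fz_of_le hz le_rfl, millsRatio]; ring
    rw [fz_of_lt hz h, hself]
    exact mul_le_mul_of_nonneg_left (antitoneOn_millsRatio hz (hz.trans h.le) h.le)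
      (by linarith [half_le_stdCDF hz])

theorem stmt11 (z : ℝ) (hz : 0 ≤ z) :
    (∀ x : ℝ, 0 ≤ x → x ≤ z →
        fz z x = (1 - (2*stdCDF z - 1)) * (2*stdCDF x - 1) / (2*stdPhi x)) ∧
    (∀ x : ℝ, z < x →
        fz z x = (2*stdCDF z - 1) * (1 - (2*stdCDF x - 1)) / (2*stdPhi x)) ∧
    IsGreatest ((fun x => |fz z x|) '' Set.Ici 0)
      ((1 - stdCDF z) * (2*stdCDF z - 1) / stdPhi z) ∧
    (1 - stdCDF z) * (2*stdCDF z - 1) / stdPhi z ≤ 1/2 := by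
  have hmax : fz z z = (1 - stdCDF z) * (2 * stdCDF z - 1) / stdPhi z := by
    rw [fz_of_le hz le_rfl, mul_div_assoc]
  refine ⟨fun x hx hxz => ?_, fun x hzx => ?_, ⟨⟨z, hz, ?_⟩, ?_⟩, mul_div_stdPhi_le_half hz⟩
  · rw [fz_of_le hx hxz]; ring
  · rw [fz_of_lt hz hzx, millsRatio]; ring
  · exact (abs_of_nonneg (fz_nonneg hz hz)).trans hmax
  · rintro _ ⟨x, hx, rfl⟩
    rw [← hmax]
    exact (abs_of_nonneg (fz_nonneg hz hx)).trans_le (fz_le_fz_self hz hx)
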